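/- arXiv:1803.11541 — 3 statements merged into one kernel-verified Lean document; each statement's English description precedes it below -/
import Mathlib

section
/- (Weak law of large numbers for Markov chains, Markov 1906) Let (X_n) be a stationary ergodic Markov chain on a finite state space with stationary distribution π, and let f be a real-valued function on the state space. Then (1/n)∑_{k=1}^n f(X_k) converges in probability to ∑_i π(i) f(i). -/
/-!
Put `F = f - π ⬝ᵥ f`. Irreducibility makes every `P`-harmonic function constant (maximum
principle), so by rank–nullity the Poisson equation `g - P g = F` is solvable. For the stationary
chain the lag-`m` covariance of `f(X_k)` and `f(X_{k+m})` is `∑ᵢ πᵢ Fᵢ (Pᵐ F)ᵢ = b m - b (m + 1)`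
with `b m = ∑ᵢ πᵢ Fᵢ (Pᵐ g)ᵢ` bounded, so along each row of the covariance matrix the sum
telescopes, the variance of `∑_{k ≤ n} f(X_k)` is `O(n)`, and Chebyshev's inequality bounds the
deviation probability of the empirical mean by `O(1 / (n ε²))`.
-/

open Filter Topology MeasureTheory ProbabilityTheory Matrix

namespace Matrix

variable {S : Type*} [Fintype S] [DecidableEq S] {P : Matrix S S ℝ}

lemma abs_mulVec_le_of_mem_rowStochastic (hP : P ∈ rowStochastic ℝ S) {g : S → ℝ} {K : ℝ}
    (hg : ∀ j, |g j| ≤ K) (i : S) : |(P *ᵥ g) i| ≤ K :=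
  calc |∑ j, P i j * g j| ≤ ∑ j, P i j * K := by
        refine (Finset.abs_sum_le_sum_abs _ _).trans (Finset.sum_le_sum fun j _ => ?_)
        rw [abs_mul, abs_of_nonneg (nonneg_of_mem_rowStochastic hP)]
        exact mul_le_mul_of_nonneg_left (hg j) (nonneg_of_mem_rowStochastic hP)
    _ = K := by rw [← Finset.sum_mul, sum_row_of_mem_rowStochastic hP, one_mul]

lemma pow_mulVec_eq_self {h : S → ℝ} (hh : P *ᵥ h = h) (n : ℕ) : P ^ n *ᵥ h = h := by
  induction n with
  | zero => simp
  | succ n ih => rw [pow_succ, ← mulVec_mulVec, hh, ih]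

lemma vecMul_pow_eq_self {π : S → ℝ} (hπ : π ᵥ* P = π) (n : ℕ) : π ᵥ* P ^ n = π := by
  induction n with
  | zero => simp
  | succ n ih => rw [pow_succ, ← vecMul_vecMul, ih, hπ]

lemma eq_of_mulVec_eq_self (hP : P ∈ rowStochastic ℝ S) (hirr : ∀ i j, ∃ n, 0 < (P ^ n) i j)
    {h : S → ℝ} (hh : P *ᵥ h = h) (i j : S) : h i = h j := by
  -- Maximum principle: at a maximum `i₀` of `h`, `h i₀` is a `P ^ n`-average of values
  -- `≤ h i₀`, so `h j = h i₀` as soon as `(P ^ n) i₀ j > 0`.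
  have : Nonempty S := ⟨i⟩
  obtain ⟨i₀, hmax⟩ := Finite.exists_max h
  suffices ∀ j, h j = h i₀ by rw [this i, this j]
  intro j
  obtain ⟨n, hn⟩ := hirr i₀ j
  have hPn := pow_mem hP n
  have hzero : ∑ k, (P ^ n) i₀ k * (h i₀ - h k) = 0 := by
    have hfix : ∑ k, (P ^ n) i₀ k * h k = h i₀ := congrFun (pow_mulVec_eq_self hh n) i₀
    simp only [mul_sub, Finset.sum_sub_distrib, ← Finset.sum_mul,
      sum_row_of_mem_rowStochastic hPn, one_mul, hfix, sub_self]
  have hj := (Finset.sum_eq_zero_iff_of_nonneg fun k _ =>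
    mul_nonneg (nonneg_of_mem_rowStochastic hPn) (sub_nonneg.mpr (hmax k))).mp hzero j
    (Finset.mem_univ j)
  exact (sub_eq_zero.mp ((mul_eq_zero.mp hj).resolve_left hn.ne')).symm

lemma exists_eq_sub_mulVec (hP : P ∈ rowStochastic ℝ S) (hirr : ∀ i j, ∃ n, 0 < (P ^ n) i j)
    {π : S → ℝ} (hπ : π ᵥ* P = π) (hπ1 : ∑ i, π i = 1) {F : S → ℝ} (hF : π ⬝ᵥ F = 0) :
    ∃ g, F = g - P *ᵥ g := by
  -- `ker (1 - P)` consists of constants, so `range (1 - P)` has codimension at most one; it lies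
  -- in the hyperplane `π ⬝ᵥ · = 0`, hence equals it.
  let D := (1 - P).mulVecLin
  let φ := dotProductBilin ℝ ℝ π
  have hker : LinearMap.ker D ≤ ℝ ∙ (1 : S → ℝ) := by
    intro h hh
    have hfix : P *ᵥ h = h := by
      simpa [D, sub_mulVec, sub_eq_zero, eq_comm] using hh
    obtain ⟨i⟩ : Nonempty S := by
      by_contra hS
      simp [not_nonempty_iff.mp hS] at hπ1
    refine Submodule.mem_span_singleton.mpr ⟨h i, funext fun j => ?_⟩
    simp [eq_of_mulVec_eq_self hP hirr hfix i j]
  have hrange : LinearMap.range D ≤ LinearMap.ker φ := by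
    rintro _ ⟨g, rfl⟩
    simp [φ, D, dotProduct_sub, dotProduct_mulVec, hπ]
  have hφ : LinearMap.range φ = ⊤ := by
    refine LinearMap.range_eq_top.mpr fun c => ⟨fun _ => c, ?_⟩
    simp [φ, dotProduct, ← Finset.sum_mul, hπ1]
  have hD := LinearMap.finrank_range_add_finrank_ker D
  have hφ' := LinearMap.finrank_range_add_finrank_ker φ
  rw [hφ, finrank_top, Module.finrank_self] at hφ'
  have hker1 : Module.finrank ℝ (LinearMap.ker D) ≤ 1 :=
    (Submodule.finrank_mono hker).trans ((finrank_span_le_card _).trans (by simp))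
  obtain ⟨g, hg⟩ : F ∈ LinearMap.range D := by
    rw [Submodule.eq_of_le_of_finrank_le hrange (by omega)]
    exact hF
  exact ⟨g, by simpa [D, sub_mulVec] using hg.symm⟩

end Matrix

section PathWeight

variable {S : Type*} {P : Matrix S S ℝ}

def pathWeight (ν : S → ℝ) (P : Matrix S S ℝ) {n : ℕ} (w : Fin (n + 1) → S) : ℝ :=
  ν (w 0) * ∏ k : Fin n, P (w k.castSucc) (w k.succ)

lemma pathWeight_nonneg {ν : S → ℝ} (hν : ∀ i, 0 ≤ ν i) (hP : ∀ i j, 0 ≤ P i j) {n : ℕ}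
    (w : Fin (n + 1) → S) : 0 ≤ pathWeight ν P w :=
  mul_nonneg (hν _) (Finset.prod_nonneg fun _ _ => hP _ _)

lemma pathWeight_cons (ν : S → ℝ) {n : ℕ} (x : S) (v : Fin (n + 1) → S) :
    pathWeight ν P (Fin.cons x v : Fin (n + 2) → S) = ν x * pathWeight (P x) P v := by
  simp only [pathWeight, Fin.prod_univ_succ, Fin.cons_zero, Fin.castSucc_zero, Fin.cons_succ,
    ← Fin.succ_castSucc]

variable [Fintype S]

lemma Fin.sum_univ_pi_succ {M : Type*} [AddCommMonoid M] {n : ℕ} (F : (Fin (n + 1) → S) → M) :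
    ∑ w, F w = ∑ x, ∑ v, F (Fin.cons x v) := by
  rw [← (Fin.consEquiv fun _ => S).sum_comp, Fintype.sum_prod_type]
  rfl

lemma sum_pathWeight_cons_mul (ν : S → ℝ) {n : ℕ} (H : (Fin (n + 1) → S) → ℝ) :
    ∑ x, ∑ v, pathWeight ν P (Fin.cons x v : Fin (n + 2) → S) * H v =
      ∑ v, pathWeight (ν ᵥ* P) P v * H v := by
  rw [Finset.sum_comm]
  refine Finset.sum_congr rfl fun v _ => ?_
  simp only [pathWeight_cons]
  simp only [pathWeight, vecMul, dotProduct, Finset.sum_mul]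
  exact Finset.sum_congr rfl fun x _ => by ring

variable [DecidableEq S]

lemma sum_pathWeight_mul_first_mul_last (n : ℕ) (ν g h : S → ℝ) :
    ∑ w : Fin (n + 1) → S, pathWeight ν P w * (g (w 0) * h (w (Fin.last n))) =
      ∑ i, ν i * g i * (P ^ n *ᵥ h) i := by
  induction n generalizing ν g with
  | zero => simp [Fin.sum_univ_pi_succ, pathWeight, mul_assoc]
  | succ n ih =>
    rw [Fin.sum_univ_pi_succ]
    refine Finset.sum_congr rfl fun x _ => ?_
    have hlast := ih (P x) 1
    simp only [Pi.one_apply, one_mul, mul_one] at hlast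
    simp only [pathWeight_cons, Fin.cons_zero, ← Fin.succ_last, Fin.cons_succ]
    rw [pow_succ', ← mulVec_mulVec, mulVec, dotProduct, ← hlast, Finset.mul_sum]
    exact Finset.sum_congr rfl fun v _ => by ring

lemma sum_pathWeight_mul_mul_last (n : ℕ) (k : Fin (n + 1)) (ν g h : S → ℝ) :
    ∑ w : Fin (n + 1) → S, pathWeight ν P w * (g (w k) * h (w (Fin.last n))) =
      ∑ i, (ν ᵥ* P ^ (k : ℕ)) i * g i * (P ^ (n - k) *ᵥ h) i := by
  induction n generalizing ν with
  | zero => simpa [Fin.fin_one_eq_zero k] using sum_pathWeight_mul_first_mul_last 0 ν g h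
  | succ n ih =>
    cases k using Fin.cases with
    | zero => simpa using sum_pathWeight_mul_first_mul_last (n + 1) ν g h
    | succ k =>
      rw [Fin.sum_univ_pi_succ]
      simp only [Fin.cons_succ, ← Fin.succ_last]
      rw [sum_pathWeight_cons_mul, ih, vecMul_vecMul, ← pow_succ', Fin.val_succ,
        Nat.add_sub_add_right]

end PathWeight

lemma sum_range_sum_range_le_of_telescoping {C : ℕ → ℕ → ℝ} {b : ℕ → ℝ} {B : ℝ}
    (hsymm : ∀ k l, C k l = C l k) (hlag : ∀ k m, C k (k + m) = b m - b (m + 1))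
    (hb : ∀ m, |b m| ≤ B) (n : ℕ) :
    ∑ k ∈ Finset.range n, ∑ l ∈ Finset.range n, C k l ≤ 4 * B * n := by
  induction n with
  | zero => simp
  | succ n ih =>
    have hcol : ∑ k ∈ Finset.range n, C k n = b 1 - b (n + 1) := by
      rw [← Finset.sum_range_reflect, ← Finset.sum_range_sub' (fun m => b (m + 1))]
      refine Finset.sum_congr rfl fun m hm => ?_
      have hm := Finset.mem_range.mp hm
      rw [← hlag, show n - 1 - m + (m + 1) = n by omega]
    have hdiag : C n n = b 0 - b 1 := by simpa using hlag n 0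
    have hrow : ∑ l ∈ Finset.range n, C n l = b 1 - b (n + 1) := by
      simpa only [hsymm n] using hcol
    simp only [Finset.sum_range_succ, Finset.sum_add_distrib, hcol, hrow, hdiag]
    have := abs_le.mp (hb 0)
    have := abs_le.mp (hb 1)
    have := abs_le.mp (hb (n + 1))
    push_cast
    linarith

section MarkovChain

variable {S : Type*} [Fintype S] [MeasurableSpace S] [MeasurableSingletonClass S]
  {Ω : Type*} [MeasurableSpace Ω] {μ : Measure Ω} {X : ℕ → Ω → S} {ν : S → ℝ}
  {P : Matrix S S ℝ}

def IsMarkovChain (μ : Measure Ω) (X : ℕ → Ω → S) (ν : S → ℝ) (P : Matrix S S ℝ) : Prop :=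
  ∀ (n : ℕ) (w : Fin (n + 1) → S),
    μ {ω | ∀ k : Fin (n + 1), X k ω = w k} = ENNReal.ofReal (pathWeight ν P w)

lemma IsMarkovChain.integral_comp_path [IsFiniteMeasure μ] (hX : IsMarkovChain μ X ν P)
    (hmeas : ∀ n, Measurable (X n)) (hν : ∀ i, 0 ≤ ν i) (hP : ∀ i j, 0 ≤ P i j) {n : ℕ}
    (H : (Fin (n + 1) → S) → ℝ) :
    ∫ ω, H (fun k => X k ω) ∂μ = ∑ w, pathWeight ν P w * H w := by
  have hpath : Measurable fun ω (k : Fin (n + 1)) => X k ω :=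
    measurable_pi_lambda _ fun k => hmeas k
  rw [← integral_map hpath.aemeasurable (Measurable.of_discrete).aestronglyMeasurable,
    integral_fintype Integrable.of_finite]
  refine Finset.sum_congr rfl fun w _ => ?_
  have hfiber : (fun ω (k : Fin (n + 1)) => X k ω) ⁻¹' {w} =
      {ω | ∀ k : Fin (n + 1), X k ω = w k} := by
    ext ω
    simp [funext_iff]
  rw [smul_eq_mul, measureReal_def, Measure.map_apply hpath (measurableSet_singleton w), hfiber,
    hX, ENNReal.toReal_ofReal (pathWeight_nonneg hν hP w)]

variable [DecidableEq S] {π : S → ℝ}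

lemma IsMarkovChain.integral_mul [IsFiniteMeasure μ] (hX : IsMarkovChain μ X π P)
    (hmeas : ∀ n, Measurable (X n)) (hπ : ∀ i, 0 ≤ π i) (hP : ∀ i j, 0 ≤ P i j)
    (hπP : π ᵥ* P = π) (g h : S → ℝ) (k m : ℕ) :
    ∫ ω, g (X k ω) * h (X (k + m) ω) ∂μ = ∑ i, π i * g i * (P ^ m *ᵥ h) i := by
  refine (hX.integral_comp_path hmeas hπ hP (n := k + m)
    fun w => g (w ⟨k, by omega⟩) * h (w (Fin.last _))).trans ?_
  rw [sum_pathWeight_mul_mul_last, vecMul_pow_eq_self hπP]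
  simp

lemma IsMarkovChain.integral_comp [IsFiniteMeasure μ] (hX : IsMarkovChain μ X π P)
    (hmeas : ∀ n, Measurable (X n)) (hπ : ∀ i, 0 ≤ π i) (hP : ∀ i j, 0 ≤ P i j)
    (hπP : π ᵥ* P = π) (g : S → ℝ) (k : ℕ) :
    ∫ ω, g (X k ω) ∂μ = π ⬝ᵥ g := by
  simpa [dotProduct] using hX.integral_mul hmeas hπ hP hπP g 1 k 0

lemma IsMarkovChain.covariance_comp [IsFiniteMeasure μ] (hX : IsMarkovChain μ X π P)
    (hmeas : ∀ n, Measurable (X n)) (hπ : ∀ i, 0 ≤ π i) (hP : ∀ i j, 0 ≤ P i j)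
    (hπP : π ᵥ* P = π) (f : S → ℝ) (k m : ℕ) :
    cov[fun ω => f (X k ω), fun ω => f (X (k + m) ω); μ] =
      ∑ i, π i * (f i - π ⬝ᵥ f) * (P ^ m *ᵥ fun j => f j - π ⬝ᵥ f) i := by
  rw [covariance, hX.integral_comp hmeas hπ hP hπP, hX.integral_comp hmeas hπ hP hπP]
  exact hX.integral_mul hmeas hπ hP hπP (fun i => f i - π ⬝ᵥ f) (fun i => f i - π ⬝ᵥ f) k m

lemma IsMarkovChain.exists_variance_sum_le [IsFiniteMeasure μ] (hX : IsMarkovChain μ X π P)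
    (hmeas : ∀ n, Measurable (X n)) (hπ : ∀ i, 0 ≤ π i) (hπ1 : ∑ i, π i = 1)
    (hP : P ∈ rowStochastic ℝ S) (hirr : ∀ i j, ∃ n, 0 < (P ^ n) i j) (hπP : π ᵥ* P = π)
    (f : S → ℝ) :
    ∃ B, ∀ n : ℕ, Var[fun ω => ∑ k ∈ Finset.Icc 1 n, f (X k ω); μ] ≤ B * n := by
  set F : S → ℝ := fun i => f i - π ⬝ᵥ f with hF
  have hFmean : π ⬝ᵥ F = 0 := by
    simp [F, dotProduct, mul_sub, Finset.sum_sub_distrib, ← Finset.sum_mul, hπ1]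
  obtain ⟨g, hg⟩ := exists_eq_sub_mulVec hP hirr hπP hπ1 hFmean
  obtain ⟨K, hK⟩ : ∃ K, ∀ j, |g j| ≤ K := Finite.exists_le _
  set b : ℕ → ℝ := fun m => ∑ i, π i * F i * (P ^ m *ᵥ g) i
  have hb : ∀ m, |b m| ≤ ∑ i, π i * |F i| * K := fun m =>
    (Finset.abs_sum_le_sum_abs _ _).trans <| Finset.sum_le_sum fun i _ => by
      rw [abs_mul, abs_mul, abs_of_nonneg (hπ i)]
      exact mul_le_mul_of_nonneg_left (abs_mulVec_le_of_mem_rowStochastic (pow_mem hP m) hK i)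
        (mul_nonneg (hπ i) (abs_nonneg _))
  have hlag : ∀ k m, cov[fun ω => f (X (k + 1) ω), fun ω => f (X (k + m + 1) ω); μ] =
      b m - b (m + 1) := by
    intro k m
    rw [Nat.add_right_comm, hX.covariance_comp hmeas hπ
      (fun i j => nonneg_of_mem_rowStochastic hP) hπP, ← hF, hg, mulVec_sub, mulVec_mulVec,
      ← pow_succ, ← Finset.sum_sub_distrib]
    exact Finset.sum_congr rfl fun i _ => by simp only [Pi.sub_apply]; ring
  refine ⟨4 * ∑ i, π i * |F i| * K, fun n => ?_⟩
  have hIcc : ∀ φ : ℕ → ℝ, ∑ k ∈ Finset.Icc 1 n, φ k = ∑ k ∈ Finset.range n, φ (k + 1) := by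
    intro φ
    rw [Finset.range_eq_Ico, Finset.sum_Ico_add' φ 0 n 1, zero_add,
      Finset.Ico_add_one_right_eq_Icc]
  rw [variance_fun_sum' (X := fun k ω => f (X k ω))
    fun k _ => MemLp.of_discrete.comp_of_map (hmeas k).aemeasurable]
  simp only [hIcc]
  exact sum_range_sum_range_le_of_telescoping (fun k l => covariance_comm _ _) hlag hb n

lemma IsMarkovChain.integral_average [IsFiniteMeasure μ] (hX : IsMarkovChain μ X π P)
    (hmeas : ∀ n, Measurable (X n)) (hπ : ∀ i, 0 ≤ π i) (hP : ∀ i j, 0 ≤ P i j)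
    (hπP : π ᵥ* P = π) (f : S → ℝ) {n : ℕ} (hn : 1 ≤ n) :
    ∫ ω, 1 / (n : ℝ) * ∑ k ∈ Finset.Icc 1 n, f (X k ω) ∂μ = π ⬝ᵥ f := by
  rw [integral_const_mul, integral_finsetSum (f := fun k ω => f (X k ω)) _ fun k _ =>
    Integrable.of_finite.comp_measurable (hmeas k)]
  simp only [hX.integral_comp hmeas hπ hP hπP, Finset.sum_const, Nat.card_Icc,
    Nat.add_sub_cancel, nsmul_eq_mul]
  field_simp

lemma IsMarkovChain.meas_ge_le_of_variance_sum_le [IsFiniteMeasure μ]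
    (hX : IsMarkovChain μ X π P) (hmeas : ∀ n, Measurable (X n)) (hπ : ∀ i, 0 ≤ π i)
    (hP : ∀ i j, 0 ≤ P i j) (hπP : π ᵥ* P = π) {f : S → ℝ} {n : ℕ} (hn : 1 ≤ n) {B : ℝ}
    (hvar : Var[fun ω => ∑ k ∈ Finset.Icc 1 n, f (X k ω); μ] ≤ B * n) {ε : ℝ} (hε : 0 < ε) :
    μ {ω | ε ≤ |1 / (n : ℝ) * ∑ k ∈ Finset.Icc 1 n, f (X k ω) - π ⬝ᵥ f|} ≤
      ENNReal.ofReal (B / ε ^ 2 / n) := by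
  have hmemLp : ∀ k, MemLp (fun ω => f (X k ω)) 2 μ := fun k =>
    MemLp.of_discrete.comp_of_map (hmeas k).aemeasurable
  have hn0 : (n : ℝ) ≠ 0 := by positivity
  rw [← hX.integral_average hmeas hπ hP hπP f hn]
  refine (meas_ge_le_variance_div_sq ((memLp_finsetSum _ fun k _ => hmemLp k).const_mul _)
    hε).trans (ENNReal.ofReal_le_ofReal ?_)
  rw [variance_const_mul, div_right_comm]
  refine div_le_div_of_nonneg_right ?_ (sq_nonneg ε)
  calc (1 / (n : ℝ)) ^ 2 * Var[fun ω => ∑ k ∈ Finset.Icc 1 n, f (X k ω); μ]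
      ≤ (1 / (n : ℝ)) ^ 2 * (B * n) := mul_le_mul_of_nonneg_left hvar (sq_nonneg _)
    _ = B / n := by field_simp

end MarkovChain

theorem markov_chain_weak_law_of_large_numbers_general
    {S : Type*} [Fintype S] [DecidableEq S] [MeasurableSpace S]
    [MeasurableSingletonClass S]
    {Ω : Type*} [MeasurableSpace Ω] (μ : Measure Ω) [IsProbabilityMeasure μ]
    (P : Matrix S S ℝ)
    (hnonneg : ∀ i j, 0 ≤ P i j)
    (hrow : ∀ i, ∑ j, P i j = 1)
    (hirr : ∀ i j, ∃ n : ℕ, 0 < (P ^ n) i j)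
    (π : S → ℝ)
    (hπnonneg : ∀ i, 0 ≤ π i) (hπsum : ∑ i, π i = 1)
    (hπstat : ∀ j, ∑ i, π i * P i j = π j)
    (X : ℕ → Ω → S) (hX : ∀ n, Measurable (X n))
    -- the finite-dimensional distributions of the stationary Markov chain:
    (hlaw : ∀ (n : ℕ) (w : Fin (n + 1) → S),
      μ {ω | ∀ k : Fin (n + 1), X k ω = w k} =
        ENNReal.ofReal (π (w 0) * ∏ k : Fin n, P (w k.castSucc) (w k.succ)))
    (f : S → ℝ) :
    ∀ ε : ℝ, 0 < ε →
      Tendsto (fun n : ℕ =>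
          μ {ω | ε ≤ |(1 / (n : ℝ)) * ∑ k ∈ Finset.Icc 1 n, f (X k ω) - ∑ i, π i * f i|})
        atTop (𝓝 0) := by
  intro ε hε
  have hchain : IsMarkovChain μ X π P := hlaw
  have hP : P ∈ rowStochastic ℝ S := mem_rowStochastic_iff_sum.mpr ⟨hnonneg, hrow⟩
  have hπP : π ᵥ* P = π := funext hπstat
  obtain ⟨B, hB⟩ := hchain.exists_variance_sum_le hX hπnonneg hπsum hP hirr hπP f
  have hbound : Tendsto (fun n : ℕ => ENNReal.ofReal (B / ε ^ 2 / n)) atTop (𝓝 0) := by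
    simpa using ENNReal.tendsto_ofReal (tendsto_const_div_atTop_nhds_zero_nat (B / ε ^ 2))
  refine tendsto_of_tendsto_of_tendsto_of_le_of_le' tendsto_const_nhds hbound
    (Eventually.of_forall fun _ => zero_le) ?_
  filter_upwards [eventually_ge_atTop 1] with n hn
  exact hchain.meas_ge_le_of_variance_sum_le hX hπnonneg hnonneg hπP hn (hB n) hε

/-- Weak law of large numbers for stationary ergodic finite Markov chains (Markov 1906):
the empirical averages of `f` along the chain converge in probability to the
`π`-expectation of `f`. -/
theorem markov_chain_weak_law_of_large_numbers
    {S : Type*} [Fintype S] [DecidableEq S] [Nonempty S] [MeasurableSpace S]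
    [MeasurableSingletonClass S]
    {Ω : Type*} [MeasurableSpace Ω] (μ : Measure Ω) [IsProbabilityMeasure μ]
    (P : Matrix S S ℝ)
    (hnonneg : ∀ i j, 0 ≤ P i j)
    (hrow : ∀ i, ∑ j, P i j = 1)
    (hirr : ∀ i j, ∃ n : ℕ, 0 < (P ^ n) i j)
    (haper : ∀ i, ∀ d : ℕ, (∀ n : ℕ, 0 < (P ^ n) i i → d ∣ n) → d = 1)
    (π : S → ℝ)
    (hπnonneg : ∀ i, 0 ≤ π i) (hπsum : ∑ i, π i = 1)
    (hπstat : ∀ j, ∑ i, π i * P i j = π j)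
    (X : ℕ → Ω → S) (hX : ∀ n, Measurable (X n))
    -- the finite-dimensional distributions of the stationary Markov chain:
    (hlaw : ∀ (n : ℕ) (w : Fin (n + 1) → S),
      μ {ω | ∀ k : Fin (n + 1), X k ω = w k} =
        ENNReal.ofReal (π (w 0) * ∏ k : Fin n, P (w k.castSucc) (w k.succ)))
    (f : S → ℝ) :
    ∀ ε : ℝ, 0 < ε →
      Tendsto (fun n : ℕ =>
          μ {ω | ε ≤ |(1 / (n : ℝ)) * ∑ k ∈ Finset.Icc 1 n, f (X k ω) - ∑ i, π i * f i|})
        atTop (𝓝 0) :=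
  markov_chain_weak_law_of_large_numbers_general μ P hnonneg hrow hirr π hπnonneg hπsum hπstat X hX
    hlaw f
end

section
/- (Galton–Watson extinction criterion) Let (Z_n) be a Galton–Watson branching process with offspring distribution (p_k), Z_0 = 1, p_1 < 1, and mean m = ∑ k·p_k. The extinction probability q = ℙ(∃ n, Z_n = 0) is the smallest fixed point in [0,1] of the offspring generating function f(s) = ∑ p_k s^k; moreover q = 1 if m ≤ 1 and q < 1 if m > 1. -/
open MeasureTheory

/-- The population sizes of a Galton–Watson branching process built from the i.i.d.
offspring array `ξ`: `Z 0 = 1` and `Z (n+1) = ∑_{i < Z n} ξ n i`. -/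
def gwProcess {Ω : Type*} (ξ : ℕ → ℕ → Ω → ℕ) : ℕ → Ω → ℕ
  | 0 => fun _ => 1
  | n + 1 => fun ω => ∑ i ∈ Finset.range (gwProcess ξ n ω), ξ n i ω

open Set Filter Topology Finset Function ProbabilityTheory

/-!
Generation `n` is independent of `Z n`, which is determined by the earlier generations; conditioning
on `Z n` therefore gives `E[s ^ Z (n+1)] = E[f(s) ^ Z n]`, hence `E[s ^ Z n] = f^[n] s` and
`P(Z n = 0) = f^[n] 0`. The events `{Z n = 0}` increase to extinction, so `q` is the limit of the
iterates `f^[n] 0` of the monotone continuous self-map `f` of `[0,1]`, i.e. its least fixed point.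
Finally `(1 - f s) / (1 - s) = ∑ pₖ (1 + s + ⋯ + s^(k-1))`: for `m ≤ 1` and `p 1 < 1` this is `< 1`
on `[0,1)`, so `f` has no fixed point there, while for `m > 1` it exceeds `1` near `s = 1`, and the
intermediate value theorem yields a fixed point below `1`.
-/

theorem isLeast_fixedPt_of_tendsto_iterate {α : Type*} [TopologicalSpace α] [LinearOrder α]
    [OrderClosedTopology α] {f : α → α} {a b q : α} (hab : a ≤ b)
    (hmaps : MapsTo f (Icc a b) (Icc a b)) (hmono : MonotoneOn f (Icc a b))
    (hcont : ContinuousOn f (Icc a b)) (hlim : Tendsto (fun n => f^[n] a) atTop (𝓝 q)) :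
    IsLeast {s ∈ Icc a b | IsFixedPt f s} q := by
  have ha : a ∈ Icc a b := left_mem_Icc.2 hab
  have hiter : ∀ n, f^[n] a ∈ Icc a b := fun n => hmaps.iterate n ha
  have hq : q ∈ Icc a b := isClosed_Icc.mem_of_tendsto hlim (Eventually.of_forall hiter)
  refine ⟨⟨hq, ?_⟩, fun s ⟨hs, hfs⟩ => ?_⟩
  · have hlim' : Tendsto (fun n => f^[n] a) atTop (𝓝[Icc a b] q) :=
      tendsto_nhdsWithin_iff.2 ⟨hlim, Eventually.of_forall hiter⟩
    refine tendsto_nhds_unique ?_ ((tendsto_add_atTop_iff_nat 1).2 hlim)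
    simp only [iterate_succ']
    exact (hcont q hq).tendsto.comp hlim'
  · have hle : ∀ n, f^[n] a ≤ s := by
      intro n
      induction n with
      | zero => exact hs.1
      | succ n ih =>
        rw [iterate_succ_apply', ← hfs.eq]
        exact hmono (hiter n) hs ih
    exact le_of_tendsto' hlim hle

section GeneratingFunction

variable {p : ℕ → ℝ} {f : ℝ → ℝ}

lemma pgf_monotoneOn (hp : ∀ k, 0 ≤ p k)
    (hf : ∀ s ∈ Icc (0 : ℝ) 1, HasSum (fun k => p k * s ^ k) (f s)) :
    MonotoneOn f (Icc 0 1) := fun s hs t ht hst =>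
  hasSum_le (fun k => mul_le_mul_of_nonneg_left (pow_le_pow_left₀ hs.1 hst k) (hp k))
    (hf s hs) (hf t ht)

lemma pgf_one (hpsum : HasSum p 1)
    (hf : ∀ s ∈ Icc (0 : ℝ) 1, HasSum (fun k => p k * s ^ k) (f s)) : f 1 = 1 :=
  (hf 1 (right_mem_Icc.2 zero_le_one)).unique (by simpa using hpsum)

lemma pgf_mapsTo (hp : ∀ k, 0 ≤ p k) (hpsum : HasSum p 1)
    (hf : ∀ s ∈ Icc (0 : ℝ) 1, HasSum (fun k => p k * s ^ k) (f s)) :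
    MapsTo f (Icc 0 1) (Icc 0 1) := fun s hs =>
  ⟨(hf s hs).nonneg fun k => mul_nonneg (hp k) (pow_nonneg hs.1 k),
    pgf_one hpsum hf ▸ pgf_monotoneOn hp hf hs (right_mem_Icc.2 zero_le_one) hs.2⟩

lemma pgf_continuousOn (hp : ∀ k, 0 ≤ p k) (hsum : Summable p)
    (hf : ∀ s ∈ Icc (0 : ℝ) 1, HasSum (fun k => p k * s ^ k) (f s)) :
    ContinuousOn f (Icc 0 1) := by
  refine (continuousOn_tsum (fun k => by fun_prop) hsum fun k s hs => ?_).congr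
    fun s hs => (hf s hs).tsum_eq.symm
  rw [norm_mul, Real.norm_of_nonneg (hp k), norm_pow, Real.norm_of_nonneg hs.1]
  exact mul_le_of_le_one_right (hp k) (pow_le_one₀ hs.1 hs.2)

/-- A difference quotient of `f` at `1`; its terms increase to `k * p k` as `s → 1`. -/
lemma hasSum_mul_geom_sum_pgf (hpsum : HasSum p 1)
    (hf : ∀ s ∈ Icc (0 : ℝ) 1, HasSum (fun k => p k * s ^ k) (f s)) {s : ℝ}
    (hs : s ∈ Ico (0 : ℝ) 1) :
    HasSum (fun k => p k * ∑ j ∈ range k, s ^ j) ((1 - f s) / (1 - s)) := by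
  have hs1 : 1 - s ≠ 0 := by linarith [hs.2]
  have h := (hpsum.sub (hf s (Ico_subset_Icc_self hs))).div_const (1 - s)
  refine h.congr_fun fun k => ?_
  rw [eq_div_iff hs1]
  linear_combination (-p k) * geom_sum_mul s k

lemma lt_pgf_of_mean_le_one (hp : ∀ k, 0 ≤ p k) (hpsum : HasSum p 1) (hp1 : p 1 < 1) {m : ℝ}
    (hm : HasSum (fun k : ℕ => (k : ℝ) * p k) m) (hm1 : m ≤ 1)
    (hf : ∀ s ∈ Icc (0 : ℝ) 1, HasSum (fun k => p k * s ^ k) (f s)) {s : ℝ}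
    (hs : s ∈ Ico (0 : ℝ) 1) : s < f s := by
  have hgeom := hasSum_mul_geom_sum_pgf hpsum hf hs
  have hgeom_le : ∀ k, ∑ j ∈ range k, s ^ j ≤ k := fun k => by
    simpa using Finset.sum_le_sum fun j (_ : j ∈ range k) => pow_le_one₀ hs.1 hs.2.le
  have hterm_le : ∀ k, p k * ∑ j ∈ range k, s ^ j ≤ k * p k := fun k => by
    rw [mul_comm (k : ℝ)]
    exact mul_le_mul_of_nonneg_left (hgeom_le k) (hp k)
  suffices (1 - f s) / (1 - s) < 1 by
    rwa [div_lt_one (by linarith [hs.2]), sub_lt_sub_iff_left] at this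
  by_cases hbig : ∃ k, 2 ≤ k ∧ 0 < p k
  · obtain ⟨k, hk, hpk⟩ := hbig
    have hgeom_lt : ∑ j ∈ range k, s ^ j < k := by
      simpa using Finset.sum_lt_sum (fun j (_ : j ∈ range k) => pow_le_one₀ hs.1 hs.2.le)
        ⟨1, mem_range.2 hk, by simpa using hs.2⟩
    have hterm_lt : p k * ∑ j ∈ range k, s ^ j < k * p k := by
      rw [mul_comm (k : ℝ)]
      exact mul_lt_mul_of_pos_left hgeom_lt hpk
    exact (hasSum_lt hterm_le hterm_lt hgeom hm).trans_le hm1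
  · -- all the mass sits on `{0, 1}`, so the mean is `p 1 < 1`
    push Not at hbig
    have hm_eq : m = p 1 := by
      have : HasSum (fun k : ℕ => (k : ℝ) * p k) ((1 : ℕ) * p 1) := hasSum_single 1 fun k hk => by
        rcases k with _ | _ | k
        · simp
        · exact absurd rfl hk
        · simp [le_antisymm (hbig (k + 2) (by omega)) (hp _)]
      simpa using hm.unique this
    exact (hasSum_le hterm_le hgeom hm).trans_lt (hm_eq ▸ hp1)

lemma exists_pgf_lt_of_one_lt_mean (hp : ∀ k, 0 ≤ p k) (hpsum : HasSum p 1) {m : ℝ}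
    (hm : HasSum (fun k : ℕ => (k : ℝ) * p k) m) (hm1 : 1 < m)
    (hf : ∀ s ∈ Icc (0 : ℝ) 1, HasSum (fun k => p k * s ^ k) (f s)) :
    ∃ s ∈ Ico (0 : ℝ) 1, f s < s := by
  obtain ⟨N, hN⟩ := (hm.tendsto_sum_nat.eventually (eventually_gt_nhds hm1)).exists
  -- a truncation of the series of `hasSum_mul_geom_sum_pgf`: a polynomial, equal at `s = 1` to a
  -- partial sum of the mean
  set φ : ℝ → ℝ := fun s => ∑ k ∈ range N, p k * ∑ j ∈ range k, s ^ j
  have hφ1 : 1 < φ 1 := by simpa [φ, mul_comm] using hN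
  have hφ : ∀ᶠ s in 𝓝[<] 1, 1 < φ s :=
    ((Continuous.tendsto (by fun_prop) 1).eventually (eventually_gt_nhds hφ1)).filter_mono
      nhdsWithin_le_nhds
  obtain ⟨s, hφs, hs⟩ := (hφ.and (Ioo_mem_nhdsLT zero_lt_one)).exists
  have hs' : s ∈ Ico (0 : ℝ) 1 := Ioo_subset_Ico_self hs
  have hφle : φ s ≤ (1 - f s) / (1 - s) :=
    sum_le_hasSum _ (fun k _ => mul_nonneg (hp k) (sum_nonneg fun j _ => pow_nonneg hs'.1 j))
      (hasSum_mul_geom_sum_pgf hpsum hf hs')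
  refine ⟨s, hs', ?_⟩
  have := hφs.trans_le hφle
  rw [lt_div_iff₀ (by linarith [hs.2])] at this
  linarith

lemma exists_fixedPt_pgf_lt_one (hp : ∀ k, 0 ≤ p k) (hpsum : HasSum p 1) {m : ℝ}
    (hm : HasSum (fun k : ℕ => (k : ℝ) * p k) m) (hm1 : 1 < m)
    (hf : ∀ s ∈ Icc (0 : ℝ) 1, HasSum (fun k => p k * s ^ k) (f s)) :
    ∃ t ∈ Ico (0 : ℝ) 1, f t = t := by
  obtain ⟨s, hs, hfs⟩ := exists_pgf_lt_of_one_lt_mean hp hpsum hm hm1 hf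
  have hcont : ContinuousOn (fun t => f t - t) (Icc 0 s) :=
    ((pgf_continuousOn hp hpsum.summable hf).mono (Icc_subset_Icc le_rfl hs.2.le)).sub
      continuousOn_id
  have hf0 : 0 ≤ f 0 := (pgf_mapsTo hp hpsum hf (left_mem_Icc.2 zero_le_one)).1
  obtain ⟨t, ht, hft⟩ := intermediate_value_Icc' hs.1 hcont
    (show (0 : ℝ) ∈ Icc (f s - s) (f 0 - 0) from ⟨by linarith, by simpa using hf0⟩)
  exact ⟨t, ⟨ht.1, ht.2.trans_lt hs.2⟩, sub_eq_zero.1 hft⟩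

end GeneratingFunction

section Fibres

variable {Ω : Type*} [MeasurableSpace Ω] {μ : Measure Ω} {g : Ω → ℕ}

lemma integral_eq_tsum_setIntegral_fiber (hg : Measurable g) {F : Ω → ℝ} (hF : Integrable F μ) :
    ∫ ω, F ω ∂μ = ∑' j, ∫ ω in g ⁻¹' {j}, F ω ∂μ := by
  have hcover : (⋃ j, g ⁻¹' {j}) = univ := by ext; simp
  rw [← setIntegral_univ, ← hcover]
  exact integral_iUnion (fun j => hg (measurableSet_singleton j)) (pairwise_disjoint_fiber g)
    hF.integrableOn

lemma integral_comp_eq_tsum (hg : Measurable g) {h : ℕ → ℝ}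
    (hh : Integrable (fun ω => h (g ω)) μ) :
    ∫ ω, h (g ω) ∂μ = ∑' j, μ.real (g ⁻¹' {j}) * h j := by
  rw [integral_eq_tsum_setIntegral_fiber hg hh]
  congr 1 with j
  rw [setIntegral_congr_fun (hg (measurableSet_singleton j)) fun ω (hω : g ω = j) => by rw [hω],
    setIntegral_const, smul_eq_mul]

lemma integrable_pow_comp [IsFiniteMeasure μ] (hg : Measurable g) {s : ℝ} (hs : |s| ≤ 1) :
    Integrable (fun ω => s ^ g ω) μ :=
  .of_bound (Measurable.of_discrete.comp hg).aestronglyMeasurable 1 <| ae_of_all _ fun ω => by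
    simpa [abs_pow] using pow_le_one₀ (abs_nonneg s) hs

end Fibres

abbrev offspringSigma {Ω : Type*} (ξ : ℕ → ℕ → Ω → ℕ) (S : Set (ℕ × ℕ)) : MeasurableSpace Ω :=
  ⨆ q ∈ S, MeasurableSpace.comap (ξ q.1 q.2) inferInstance

section OffspringSigma

variable {Ω : Type*} {ξ : ℕ → ℕ → Ω → ℕ}

lemma offspringSigma_mono {S T : Set (ℕ × ℕ)} (h : S ⊆ T) :
    offspringSigma ξ S ≤ offspringSigma ξ T :=
  biSup_mono h

lemma measurable_offspringSigma {S : Set (ℕ × ℕ)} {q : ℕ × ℕ} (hq : q ∈ S) :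
    Measurable[offspringSigma ξ S] (ξ q.1 q.2) :=
  Measurable.of_comap_le <| le_biSup (fun q : ℕ × ℕ => MeasurableSpace.comap (ξ q.1 q.2) _) hq

lemma measurable_gwProcess_offspringSigma (n : ℕ) :
    Measurable[offspringSigma ξ {q | q.1 < n}] (gwProcess ξ n) := by
  induction n with
  | zero => exact measurable_const
  | succ n ih =>
    -- make `offspringSigma` the ambient σ-algebra, so that the usual measurability API applies
    let := offspringSigma ξ {q | q.1 < n + 1}
    have hZ : Measurable (gwProcess ξ n) :=
      ih.mono (offspringSigma_mono fun q (hq : q.1 < n) => Nat.lt_succ_of_lt hq) le_rfl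
    have hrow : ∀ j, Measurable fun ω => ∑ i ∈ range j, ξ n i ω := fun j =>
      Finset.measurable_sum _ fun i _ => measurable_offspringSigma (q := (n, i)) (by simp)
    exact (measurable_from_prod_countable_left (f := fun x : Ω × ℕ => ∑ i ∈ range x.2, ξ n i x.1)
      hrow).comp (measurable_id.prodMk hZ)

lemma measurable_offspringRow (n : ℕ) :
    Measurable[offspringSigma ξ {q | q.1 = n}] fun ω i => ξ n i ω := by
  let := offspringSigma ξ {q | q.1 = n}
  exact measurable_pi_lambda _ fun i => measurable_offspringSigma (q := (n, i)) rfl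

variable [MeasurableSpace Ω]

lemma offspringSigma_le (hmeas : ∀ n i, Measurable (ξ n i)) (S : Set (ℕ × ℕ)) :
    offspringSigma ξ S ≤ ‹MeasurableSpace Ω› :=
  iSup₂_le fun q _ => (hmeas q.1 q.2).comap_le

lemma measurable_gwProcess (hmeas : ∀ n i, Measurable (ξ n i)) (n : ℕ) :
    Measurable (gwProcess ξ n) :=
  (measurable_gwProcess_offspringSigma n).mono (offspringSigma_le hmeas _) le_rfl

lemma indep_offspringSigma {μ : Measure Ω} (hmeas : ∀ n i, Measurable (ξ n i))
    (hindep : iIndepFun (fun q : ℕ × ℕ => ξ q.1 q.2) μ) {S T : Set (ℕ × ℕ)}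
    (hST : Disjoint S T) :
    Indep (offspringSigma ξ S) (offspringSigma ξ T) μ :=
  indep_iSup_of_disjoint (m := fun q : ℕ × ℕ => MeasurableSpace.comap (ξ q.1 q.2) inferInstance)
    (fun q => (hmeas q.1 q.2).comap_le) hindep.iIndep hST

end OffspringSigma

section Generation

variable {Ω : Type*} [MeasurableSpace Ω] {μ : Measure Ω} [IsProbabilityMeasure μ]
  {ξ : ℕ → ℕ → Ω → ℕ} {p : ℕ → ℝ} {f : ℝ → ℝ}

lemma integral_pow_offspring (hmeas : ∀ n i, Measurable (ξ n i)) (hp : ∀ k, 0 ≤ p k)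
    (hdist : ∀ n i k, μ {ω | ξ n i ω = k} = ENNReal.ofReal (p k))
    (hf : ∀ s ∈ Icc (0 : ℝ) 1, HasSum (fun k => p k * s ^ k) (f s)) {s : ℝ}
    (hs : s ∈ Icc (0 : ℝ) 1) (n i : ℕ) :
    ∫ ω, s ^ ξ n i ω ∂μ = f s := by
  rw [integral_comp_eq_tsum (hmeas n i)
      (integrable_pow_comp (hmeas n i) (abs_le.2 ⟨by linarith [hs.1], hs.2⟩)),
    ← (hf s hs).tsum_eq]
  congr 1 with k
  rw [measureReal_def, show ξ n i ⁻¹' {k} = {ω | ξ n i ω = k} from rfl, hdist,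
    ENNReal.toReal_ofReal (hp k)]

lemma integral_prod_pow_offspring (hmeas : ∀ n i, Measurable (ξ n i))
    (hindep : iIndepFun (fun q : ℕ × ℕ => ξ q.1 q.2) μ) (hp : ∀ k, 0 ≤ p k)
    (hdist : ∀ n i k, μ {ω | ξ n i ω = k} = ENNReal.ofReal (p k))
    (hf : ∀ s ∈ Icc (0 : ℝ) 1, HasSum (fun k => p k * s ^ k) (f s)) {s : ℝ}
    (hs : s ∈ Icc (0 : ℝ) 1) (n j : ℕ) :
    ∫ ω, ∏ i ∈ range j, s ^ ξ n i ω ∂μ = f s ^ j := by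
  have hrow : iIndepFun (fun i : Fin j => fun ω => s ^ ξ n i ω) μ :=
    (hindep.comp (fun _ k => s ^ k) fun _ => Measurable.of_discrete).precomp
      (g := fun i : Fin j => ((n, i) : ℕ × ℕ)) fun a b h => Fin.ext (Prod.ext_iff.1 h).2
  simp_rw [← Fin.prod_univ_eq_prod_range (fun i => s ^ ξ n i _)]
  rw [hrow.integral_fun_prod_eq_prod_integral fun i =>
    (Measurable.of_discrete.comp (hmeas n i)).aestronglyMeasurable]
  simp [integral_pow_offspring hmeas hp hdist hf hs]

lemma setIntegral_prod_pow_offspring (hmeas : ∀ n i, Measurable (ξ n i))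
    (hindep : iIndepFun (fun q : ℕ × ℕ => ξ q.1 q.2) μ) (hp : ∀ k, 0 ≤ p k)
    (hdist : ∀ n i k, μ {ω | ξ n i ω = k} = ENNReal.ofReal (p k))
    (hf : ∀ s ∈ Icc (0 : ℝ) 1, HasSum (fun k => p k * s ^ k) (f s)) {s : ℝ}
    (hs : s ∈ Icc (0 : ℝ) 1) (n j : ℕ) :
    ∫ ω in gwProcess ξ n ⁻¹' {j}, ∏ i ∈ range j, s ^ ξ n i ω ∂μ
      = μ.real (gwProcess ξ n ⁻¹' {j}) * f s ^ j := by
  have hpast_row : Indep (offspringSigma ξ {q | q.1 < n}) (offspringSigma ξ {q | q.1 = n}) μ :=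
    indep_offspringSigma hmeas hindep <| disjoint_left.2 fun q (hlt : q.1 < n) heq => hlt.ne heq
  rw [Indep.setIntegral_eq_smul (X := fun ω i => ξ n i ω)
    (f := fun x : ℕ → ℕ => ∏ i ∈ range j, s ^ x i) (offspringSigma_le hmeas _)
    (indep_of_indep_of_le_right hpast_row (measurable_offspringRow n).comap_le)
    ((measurable_offspringRow n).mono (offspringSigma_le hmeas _) le_rfl).aemeasurable
    (measurable_gwProcess_offspringSigma n (measurableSet_singleton j))
    (Finset.measurable_prod _ fun i _ =>
      Measurable.of_discrete.comp (measurable_pi_apply i)).aestronglyMeasurable,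
    integral_prod_pow_offspring hmeas hindep hp hdist hf hs, smul_eq_mul]

lemma integral_pow_gwProcess_succ (hmeas : ∀ n i, Measurable (ξ n i))
    (hindep : iIndepFun (fun q : ℕ × ℕ => ξ q.1 q.2) μ) (hp : ∀ k, 0 ≤ p k)
    (hdist : ∀ n i k, μ {ω | ξ n i ω = k} = ENNReal.ofReal (p k))
    (hf : ∀ s ∈ Icc (0 : ℝ) 1, HasSum (fun k => p k * s ^ k) (f s)) {s : ℝ}
    (hs : s ∈ Icc (0 : ℝ) 1) (hfs : f s ∈ Icc (0 : ℝ) 1) (n : ℕ) :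
    ∫ ω, s ^ gwProcess ξ (n + 1) ω ∂μ = ∫ ω, f s ^ gwProcess ξ n ω ∂μ := by
  have hZ := measurable_gwProcess hmeas n
  have hfiber : ∀ j, ∫ ω in gwProcess ξ n ⁻¹' {j}, s ^ gwProcess ξ (n + 1) ω ∂μ
      = μ.real (gwProcess ξ n ⁻¹' {j}) * f s ^ j := fun j => by
    rw [← setIntegral_prod_pow_offspring hmeas hindep hp hdist hf hs n j]
    refine setIntegral_congr_fun (hZ (measurableSet_singleton j)) fun ω (hω : _ = j) => ?_
    rw [prod_pow_eq_pow_sum, ← hω]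
    rfl
  rw [integral_eq_tsum_setIntegral_fiber hZ (integrable_pow_comp (measurable_gwProcess hmeas _)
      (abs_le.2 ⟨by linarith [hs.1], hs.2⟩)),
    integral_comp_eq_tsum hZ (integrable_pow_comp hZ (abs_le.2 ⟨by linarith [hfs.1], hfs.2⟩))]
  simp_rw [hfiber]

lemma integral_pow_gwProcess (hmeas : ∀ n i, Measurable (ξ n i))
    (hindep : iIndepFun (fun q : ℕ × ℕ => ξ q.1 q.2) μ) (hp : ∀ k, 0 ≤ p k)
    (hpsum : HasSum p 1) (hdist : ∀ n i k, μ {ω | ξ n i ω = k} = ENNReal.ofReal (p k))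
    (hf : ∀ s ∈ Icc (0 : ℝ) 1, HasSum (fun k => p k * s ^ k) (f s)) {s : ℝ}
    (hs : s ∈ Icc (0 : ℝ) 1) (n : ℕ) :
    ∫ ω, s ^ gwProcess ξ n ω ∂μ = f^[n] s := by
  induction n generalizing s with
  | zero => simp [gwProcess]
  | succ n ih =>
    have hfs := pgf_mapsTo hp hpsum hf hs
    rw [integral_pow_gwProcess_succ hmeas hindep hp hdist hf hs hfs, ih hfs, iterate_succ_apply]

lemma measureReal_gwProcess_eq_zero (hmeas : ∀ n i, Measurable (ξ n i))
    (hindep : iIndepFun (fun q : ℕ × ℕ => ξ q.1 q.2) μ) (hp : ∀ k, 0 ≤ p k)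
    (hpsum : HasSum p 1) (hdist : ∀ n i k, μ {ω | ξ n i ω = k} = ENNReal.ofReal (p k))
    (hf : ∀ s ∈ Icc (0 : ℝ) 1, HasSum (fun k => p k * s ^ k) (f s)) (n : ℕ) :
    μ.real {ω | gwProcess ξ n ω = 0} = f^[n] 0 := by
  have hZ := measurable_gwProcess hmeas n
  rw [← integral_pow_gwProcess hmeas hindep hp hpsum hdist hf (left_mem_Icc.2 zero_le_one) n,
    integral_comp_eq_tsum hZ (integrable_pow_comp hZ (by simp)),
    tsum_eq_single 0 fun j hj => by simp [hj]]
  simp only [pow_zero, mul_one]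
  rfl

end Generation

lemma monotone_setOf_gwProcess_eq_zero {Ω : Type*} (ξ : ℕ → ℕ → Ω → ℕ) :
    Monotone fun n => {ω | gwProcess ξ n ω = 0} :=
  monotone_nat_of_le_succ fun n ω (hω : gwProcess ξ n ω = 0) =>
    show ∑ i ∈ range (gwProcess ξ n ω), ξ n i ω = 0 by rw [hω, sum_range_zero]

lemma tendsto_measureReal_gwProcess_eq_zero {Ω : Type*} [MeasurableSpace Ω] (μ : Measure Ω)
    [IsFiniteMeasure μ] (ξ : ℕ → ℕ → Ω → ℕ) :
    Tendsto (fun n => μ.real {ω | gwProcess ξ n ω = 0}) atTop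
      (𝓝 (μ.real {ω | ∃ n, gwProcess ξ n ω = 0})) := by
  rw [ofPred_exists]
  exact (ENNReal.tendsto_toReal (measure_ne_top μ _)).comp
    (tendsto_measure_iUnion_atTop (monotone_setOf_gwProcess_eq_zero ξ))

/-- Galton–Watson extinction criterion: the extinction probability `q` is the smallest
fixed point in `[0,1]` of the offspring generating function `f(s) = ∑ p_k s^k`;
moreover `q = 1` if the mean `m ≤ 1` and `q < 1` if `m > 1`. -/
theorem galton_watson_extinction
    {Ω : Type*} [MeasurableSpace Ω] (μ : Measure Ω) [IsProbabilityMeasure μ]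
    (p : ℕ → ℝ) (hp : ∀ k, 0 ≤ p k) (hpsum : HasSum p 1) (hp1 : p 1 < 1)
    (m : ℝ) (hm : HasSum (fun k : ℕ => (k : ℝ) * p k) m)
    (ξ : ℕ → ℕ → Ω → ℕ) (hmeas : ∀ n i, Measurable (ξ n i))
    (hindep : ProbabilityTheory.iIndepFun
      (fun q : ℕ × ℕ => ξ q.1 q.2) μ)
    (hdist : ∀ n i k, μ {ω | ξ n i ω = k} = ENNReal.ofReal (p k))
    (f : ℝ → ℝ) (hf : ∀ s ∈ Set.Icc (0 : ℝ) 1, HasSum (fun k => p k * s ^ k) (f s))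
    (q : ℝ) (hq : q = (μ {ω | ∃ n, gwProcess ξ n ω = 0}).toReal) :
    q ∈ Set.Icc (0 : ℝ) 1 ∧ f q = q ∧
      (∀ s ∈ Set.Icc (0 : ℝ) 1, f s = s → q ≤ s) ∧
      (m ≤ 1 → q = 1) ∧ (1 < m → q < 1) := by
  have hlim : Tendsto (fun n => f^[n] 0) atTop (𝓝 q) := by
    simpa only [hq, ← measureReal_def,
      measureReal_gwProcess_eq_zero hmeas hindep hp hpsum hdist hf] using
      tendsto_measureReal_gwProcess_eq_zero μ ξ
  obtain ⟨⟨hq01, hfq⟩, hleast⟩ := isLeast_fixedPt_of_tendsto_iterate zero_le_one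
    (pgf_mapsTo hp hpsum hf) (pgf_monotoneOn hp hf) (pgf_continuousOn hp hpsum.summable hf) hlim
  refine ⟨hq01, hfq, fun s hs hfs => hleast ⟨hs, hfs⟩, fun hm1 => ?_, fun hm1 => ?_⟩
  · by_contra hq1
    exact (lt_pgf_of_mean_le_one hp hpsum hp1 hm hm1 hf ⟨hq01.1, hq01.2.lt_of_ne hq1⟩).ne' hfq
  · obtain ⟨t, ht, hft⟩ := exists_fixedPt_pgf_lt_one hp hpsum hm hm1 hf
    exact (hleast ⟨Ico_subset_Icc_self ht, hft⟩).trans_lt ht.2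
end

section
/- (Pollaczek–Khinchine mean formula) In a stationary M/G/1 queue with Poisson arrival rate λ, service times with mean E[S] and second moment E[S²], and utilization ρ = λE[S] < 1, the mean number of customers in the system is L = ρ + λ²E[S²]/(2(1−ρ)). -/
/-!
Let `A` be the number of Poisson arrivals during one service and `α m = P(A > m)`
(`tailSum a m`). Mixing the factorial moments of the Poisson law over the service time gives
`∑ α m = E A = ρ` and `∑ m α m = E (A choose 2) = λ² E[S²] / 2`. The balance equations say that
the number left behind by the next departure is `(N - 1)⁺ + A`; equating the probabilities of
crossing the cut between levels `k` and `k + 1` downwards and upwards gives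
`p (k + 1) = p 0 α k + ∑_{i + m = k} p (i + 1) α m`. Summing over `k` yields `p 0 = 1 - ρ`, and
summing with weight `k` (Cauchy products) yields `L - ρ = (L - ρ) ρ + λ² E[S²] / 2`.
-/

open Finset MeasureTheory Nat

theorem HasSum.mul_sum_antidiagonal {f g : ℕ → ℝ} {F G : ℝ} (hF : HasSum f F) (hG : HasSum g G) :
    HasSum (fun n => ∑ x ∈ antidiagonal n, f x.1 * g x.2) (F * G) := by
  have hf : Summable fun n => ‖f n‖ := summable_abs_iff.2 hF.summable
  have hg : Summable fun n => ‖g n‖ := summable_abs_iff.2 hG.summable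
  rw [← hF.tsum_eq, ← hG.tsum_eq, tsum_mul_tsum_eq_tsum_sum_antidiagonal_of_summable_norm hf hg]
  exact (summable_norm_sum_mul_antidiagonal_of_summable_norm hf hg).of_norm.hasSum

theorem sum_Icc_one_eq_sum_antidiagonal {M : Type*} [AddCommMonoid M] (f : ℕ → ℕ → M) (n : ℕ) :
    ∑ i ∈ Icc 1 (n + 1), f i (n + 1 - i) = ∑ x ∈ antidiagonal n, f (x.1 + 1) x.2 := by
  rw [Nat.sum_antidiagonal_eq_sum_range_succ_mk, ← Finset.Ico_add_one_right_eq_Icc,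
    sum_Ico_eq_sum_range]
  refine sum_congr (by simp) fun k hk => ?_
  congr 1 <;> omega

noncomputable def tailSum (c : ℕ → ℝ) (m : ℕ) : ℝ := ∑' n, c (n + (m + 1))

theorem sum_range_add_tailSum {c : ℕ → ℝ} {s : ℝ} (hc : HasSum c s) (m : ℕ) :
    ∑ i ∈ range (m + 1), c i + tailSum c m = s :=
  (hc.summable.sum_add_tsum_nat_add (m + 1)).trans hc.tsum_eq

theorem hasSum_ite_lt_iff {c : ℕ → ℝ} {T : ℝ} (m : ℕ) :
    HasSum (fun n => if m < n then c n else 0) T ↔ HasSum (fun n => c (n + (m + 1))) T := by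
  rw [← hasSum_nat_add_iff' (m + 1), sum_eq_zero fun i hi => if_neg (by simp at hi; omega),
    sub_zero]
  simp only [show ∀ n, m < n + (m + 1) from fun n => by omega, if_true]

theorem hasSum_mul_tailSum {w c : ℕ → ℝ} {S : ℝ} (hw : 0 ≤ w) (hc : 0 ≤ c) (hsc : Summable c)
    (h : HasSum (fun n => (∑ m ∈ range n, w m) * c n) S) :
    HasSum (fun m => w m * tailSum c m) S := by
  set F : ℕ × ℕ → ℝ := fun x => if x.2 < x.1 then w x.2 * c x.1 else 0
  have hFn : ∀ n, HasSum (fun m => F (n, m)) ((∑ m ∈ range n, w m) * c n) := fun n => by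
    rw [sum_mul, ← sum_congr rfl fun m hm => if_pos (mem_range.1 hm)]
    exact hasSum_sum_of_ne_finset_zero fun m hm => if_neg (by simpa using hm)
  have hFm : ∀ m, HasSum (fun n => F (n, m)) (w m * tailSum c m) := fun m =>
    (hasSum_ite_lt_iff m).2 ((summable_nat_add_iff (m + 1)).2 hsc).hasSum |>.mul_left (w m)
      |>.congr_fun fun n => by simp only [F]; split_ifs <;> simp
  obtain ⟨T, hF⟩ : Summable F := (summable_prod_of_nonneg fun x => by
      simp only [F, Pi.zero_apply]; split_ifs
      exacts [mul_nonneg (hw _) (hc _), le_rfl]).2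
    ⟨fun n => (hFn n).summable, h.summable.congr fun n => (hFn n).tsum_eq.symm⟩
  obtain rfl : T = S := (hF.prod_fiberwise hFn).unique h
  exact ((Equiv.prodComm ℕ ℕ).hasSum_iff.2 hF).prod_fiberwise hFm

theorem hasSum_tailSum {c : ℕ → ℝ} {S : ℝ} (hc : 0 ≤ c) (hsc : Summable c)
    (h : HasSum (fun n : ℕ => (n : ℝ) * c n) S) : HasSum (tailSum c) S := by
  simpa using hasSum_mul_tailSum (w := 1) zero_le_one hc hsc (by simpa using h)

theorem hasSum_nat_mul_tailSum {c : ℕ → ℝ} {S : ℝ} (hc : 0 ≤ c) (hsc : Summable c)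
    (h : HasSum (fun n => (n.choose 2 : ℝ) * c n) S) :
    HasSum (fun m : ℕ => (m : ℝ) * tailSum c m) S := by
  refine hasSum_mul_tailSum (w := Nat.cast) (fun _ => Nat.cast_nonneg _) hc hsc
    (h.congr_fun fun n => ?_)
  rw [← Nat.cast_sum, sum_range_id, Nat.choose_two_right]

theorem Real.hasSum_choose_mul_pow_div_factorial (x : ℝ) (j : ℕ) :
    HasSum (fun k => (k.choose j : ℝ) * (x ^ k / k !)) (x ^ j / j ! * Real.exp x) := by
  rw [← hasSum_nat_add_iff' j, sum_eq_zero fun k hk => by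
    rw [Nat.choose_eq_zero_of_lt (mem_range.1 hk), Nat.cast_zero, zero_mul], sub_zero]
  have hexp : HasSum (fun k => x ^ k / k !) (Real.exp x) := by
    rw [Real.exp_eq_exp_ℝ]; exact NormedSpace.expSeries_div_hasSum_exp x
  refine (hexp.mul_left (x ^ j / j !)).congr_fun fun k => ?_
  have hchoose : ((k + j).choose j : ℝ) ≠ 0 := by
    exact_mod_cast (Nat.choose_pos (Nat.le_add_left j k)).ne'
  rw [← Nat.add_choose_mul_factorial_mul_factorial k j, pow_add]
  push_cast
  field_simp

theorem hasSum_choose_mul_poisson (y : ℝ) (j : ℕ) :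
    HasSum (fun k => (k.choose j : ℝ) * (Real.exp (-y) * y ^ k / k !)) (y ^ j / j !) := by
  have h := (Real.hasSum_choose_mul_pow_div_factorial y j).mul_left (Real.exp (-y))
  rw [mul_left_comm, ← Real.exp_add, neg_add_cancel, Real.exp_zero, mul_one] at h
  exact h.congr_fun fun k => by ring

theorem hasSum_choose_mul_integral_poisson {σ : Measure ℝ} {lam : ℝ} (hlam : 0 ≤ lam)
    (hσ : ∀ᵐ t ∂σ, 0 ≤ t) {j : ℕ} (hj : Integrable (fun t => t ^ j) σ) :
    HasSum (fun k => (k.choose j : ℝ) * ∫ t, Real.exp (-lam * t) * (lam * t) ^ k / k ! ∂σ)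
      (lam ^ j / j ! * ∫ t, t ^ j ∂σ) := by
  set F : ℕ → ℝ → ℝ := fun k t => (k.choose j : ℝ) * (Real.exp (-lam * t) * (lam * t) ^ k / k !)
  have hF : ∀ t, HasSum (F · t) (lam ^ j / j ! * t ^ j) := fun t => by
    simpa only [F, neg_mul, mul_pow, mul_div_right_comm] using hasSum_choose_mul_poisson (lam * t) j
  have hF0 : ∀ᵐ t ∂σ, ∀ k, 0 ≤ F k t := hσ.mono fun t ht k => by
    have := mul_nonneg hlam ht
    positivity
  simp only [← integral_const_mul, ← integral_const_mul (lam ^ j / j !)]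
  refine hasSum_integral_of_dominated_convergence F (fun k => by fun_prop)
    (fun k => hF0.mono fun t ht => (Real.norm_of_nonneg (ht k)).le)
    (.of_forall fun t => (hF t).summable) ?_ (.of_forall hF)
  exact (hj.const_mul _).congr (.of_forall fun t => (hF t).tsum_eq.symm)

theorem succ_eq_of_balance {p a α : ℕ → ℝ}
    (hbal : ∀ j, p j = p 0 * a j + ∑ x ∈ antidiagonal j, p (x.1 + 1) * a x.2)
    (hα : ∀ m, ∑ i ∈ range (m + 1), a i + α m = 1) (k : ℕ) :
    p (k + 1) = p 0 * α k + ∑ x ∈ antidiagonal k, p (x.1 + 1) * α x.2 := by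
  have hα0 : a 0 + α 0 = 1 := by simpa using hα 0
  induction k with
  | zero =>
    have h0 := hbal 0
    simp only [Nat.antidiagonal_zero, sum_singleton] at h0 ⊢
    linear_combination -h0 - (p 0 + p 1) * hα0
  | succ k ih =>
    have hαsucc : ∀ m, α (m + 1) = α m - a (m + 1) := fun m => by
      linear_combination hα (m + 1) - hα m - sum_range_succ a (m + 1)
    have hb := hbal (k + 1)
    rw [Nat.sum_antidiagonal_succ'] at hb ⊢
    simp only [hαsucc, mul_sub, sum_sub_distrib]
    linear_combination ih - hb - p (k + 2) * hα0

theorem mean_mul_one_sub_of_balance {p a : ℕ → ℝ} {ρ M L : ℝ}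
    (hbal : ∀ j, p j = p 0 * a j + ∑ x ∈ antidiagonal j, p (x.1 + 1) * a x.2)
    (ha : 0 ≤ a) (hp : HasSum p 1) (ha1 : HasSum a 1)
    (haρ : HasSum (fun n : ℕ => (n : ℝ) * a n) ρ)
    (haM : HasSum (fun n => (n.choose 2 : ℝ) * a n) M)
    (hpL : HasSum (fun n : ℕ => (n : ℝ) * p n) L) :
    (L - ρ) * (1 - ρ) = M := by
  have hα := hasSum_tailSum ha ha1.summable haρ
  have hαM := hasSum_nat_mul_tailSum ha ha1.summable haM
  have hsucc := succ_eq_of_balance hbal (sum_range_add_tailSum ha1)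
  have hp1 : HasSum (fun k => p (k + 1)) (1 - p 0) := by
    simpa using (hasSum_nat_add_iff' 1).2 hp
  have hpL1 : HasSum (fun k : ℕ => (k : ℝ) * p (k + 1)) (L - (1 - p 0)) := by
    have := ((hasSum_nat_add_iff' 1).2 hpL).sub hp1
    simp only [sum_range_one, Nat.cast_zero, zero_mul, sub_zero, Nat.cast_add_one] at this
    exact this.congr_fun fun k => by ring
  have hp0 : 1 - p 0 = p 0 * ρ + (1 - p 0) * ρ :=
    hp1.unique (((hα.mul_left (p 0)).add (hp1.mul_sum_antidiagonal hα)).congr_fun hsucc)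
  have hpL1_eq : L - (1 - p 0) = p 0 * M + ((L - (1 - p 0)) * ρ + (1 - p 0) * M) := by
    refine hpL1.unique <| ((hαM.mul_left (p 0)).add ((hpL1.mul_sum_antidiagonal hα).add
      (hp1.mul_sum_antidiagonal hαM))).congr_fun fun k => ?_
    rw [hsucc k, mul_add, ← sum_add_distrib, mul_sum]
    congr 1
    · ring
    · refine sum_congr rfl fun x hx => ?_
      rw [← mem_antidiagonal.1 hx, Nat.cast_add]
      ring
  rw [show p 0 = 1 - ρ by linear_combination -hp0] at hpL1_eq
  linear_combination hpL1_eq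

theorem pollaczek_khinchine_mean_general
    (lam : ℝ) (hlam : 0 < lam)
    (σ : Measure ℝ) [IsProbabilityMeasure σ] (hσ : σ (Set.Iio 0) = 0)
    (ES ES2 : ℝ)
    (hES : ES = ∫ t, t ∂σ) (hES2 : ES2 = ∫ t, t ^ 2 ∂σ)
    (hint : Integrable (fun t => t) σ) (hint2 : Integrable (fun t => t ^ 2) σ)
    (ρ : ℝ) (hρ : ρ = lam * ES) (hstab : ρ < 1)
    (a : ℕ → ℝ)
    (ha : ∀ k, a k = ∫ t, Real.exp (-lam * t) * (lam * t) ^ k / (Nat.factorial k) ∂σ)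
    (p : ℕ → ℝ) (hpsum : HasSum p 1)
    (hbalance : ∀ j, p j = p 0 * a j + ∑ i ∈ Finset.Icc 1 (j + 1), p i * a (j + 1 - i))
    (L : ℝ) (hL : HasSum (fun j : ℕ => (j : ℝ) * p j) L) :
    L = ρ + lam ^ 2 * ES2 / (2 * (1 - ρ)) := by
  have hσ_nonneg : ∀ᵐ t ∂σ, 0 ≤ t := ae_iff.2 (by simpa [← Set.Iio_def] using hσ)
  have ha0 : 0 ≤ a := fun k => (ha k).symm ▸ integral_nonneg_of_ae <|
    hσ_nonneg.mono fun t ht => by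
      have := mul_nonneg hlam.le ht
      positivity
  have hmoment {j : ℕ} (hj : Integrable (fun t => t ^ j) σ) :
      HasSum (fun k => (k.choose j : ℝ) * a k) (lam ^ j / j ! * ∫ t, t ^ j ∂σ) := by
    simpa only [← ha] using hasSum_choose_mul_integral_poisson hlam.le hσ_nonneg hj
  have ha1 : HasSum a 1 := by simpa using hmoment (j := 0) (by simp)
  have haρ : HasSum (fun n : ℕ => (n : ℝ) * a n) ρ := by
    simpa [hρ, hES] using hmoment (j := 1) (by simpa using hint)
  have haM : HasSum (fun n => (n.choose 2 : ℝ) * a n) (lam ^ 2 * ES2 / 2) := by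
    simpa [hES2, div_mul_eq_mul_div] using hmoment hint2
  have key := mean_mul_one_sub_of_balance
    (fun j => (hbalance j).trans (by rw [sum_Icc_one_eq_sum_antidiagonal fun i m => p i * a m]))
    ha0 hpsum ha1 haρ haM hL
  have : 1 - ρ ≠ 0 := (sub_pos.2 hstab).ne'
  field_simp
  linear_combination 2 * key

/-- Pollaczek–Khinchine mean formula for the stationary M/G/1 queue: with Poisson
arrival rate `λ`, service distribution `σ` with mean `E[S]` and second moment `E[S²]`,
and utilization `ρ = λ E[S] < 1`, the stationary mean number in system is
`L = ρ + λ² E[S²] / (2(1-ρ))`.  The stationary queue-length distribution `p` is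
characterized by the balance equations of the embedded chain at departure epochs,
where `a k` is the probability of `k` Poisson arrivals during one service. -/
theorem pollaczek_khinchine_mean
    (lam : ℝ) (hlam : 0 < lam)
    (σ : Measure ℝ) [IsProbabilityMeasure σ] (hσ : σ (Set.Iio 0) = 0)
    (ES ES2 : ℝ)
    (hES : ES = ∫ t, t ∂σ) (hES2 : ES2 = ∫ t, t ^ 2 ∂σ)
    (hint : Integrable (fun t => t) σ) (hint2 : Integrable (fun t => t ^ 2) σ)
    (ρ : ℝ) (hρ : ρ = lam * ES) (hstab : ρ < 1)
    (a : ℕ → ℝ)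
    (ha : ∀ k, a k = ∫ t, Real.exp (-lam * t) * (lam * t) ^ k / (Nat.factorial k) ∂σ)
    (p : ℕ → ℝ) (hpnonneg : ∀ j, 0 ≤ p j) (hpsum : HasSum p 1)
    (hbalance : ∀ j, p j = p 0 * a j + ∑ i ∈ Finset.Icc 1 (j + 1), p i * a (j + 1 - i))
    (L : ℝ) (hL : HasSum (fun j : ℕ => (j : ℝ) * p j) L) :
    L = ρ + lam ^ 2 * ES2 / (2 * (1 - ρ)) :=
  pollaczek_khinchine_mean_general lam hlam σ hσ ES ES2 hES hES2 hint hint2 ρ hρ hstab a ha p hpsum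
    hbalance L hL
end
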